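/- arXiv:2603.25149 — 2 statements merged into one kernel-verified Lean document; each statement's English description precedes it below -/
import Mathlib

section
/- If f₀, …, f_{n−1} are real analytic functions on an open interval I such that for each k = 1, …, n the Wronskian determinant W(f₀,…,f_{k−1})(t) = det(f_j^{(i)}(t))_{0≤i,j≤k−1} is nonzero for all t ∈ I, then for each k any nontrivial linear combination α₀f₀ + ⋯ + α_{k−1}f_{k−1} has at most k−1 zeros in I counted with multiplicity. -/
open Real Finset

/-- Order of vanishing of `g` at `t`: the least `n` with `iteratedDeriv n g t ≠ 0`. -/
noncomputable def zeroMult (g : ℝ → ℝ) (t : ℝ) : ℕ :=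
  sInf {n : ℕ | iteratedDeriv n g t ≠ 0}

/-- `g` has at most `N` zeros in `I`, counted with multiplicity. -/
def ZerosWithMultLE (g : ℝ → ℝ) (I : Set ℝ) (N : ℕ) : Prop :=
  ∀ s : Finset ℝ, (↑s : Set ℝ) ⊆ I → (∀ t ∈ s, g t = 0) → ∑ t ∈ s, zeroMult g t ≤ N

namespace ECT

open Topology

variable {U : Set ℝ}

lemma itdw_open (n : ℕ) (hU : IsOpen U) {x : ℝ} (hx : x ∈ U) (f : ℝ → ℝ) :
    iteratedDerivWithin n f U x = iteratedDeriv n f x := by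
  simp only [iteratedDerivWithin, iteratedDeriv, iteratedFDerivWithin_of_isOpen n hU hx]

lemma itd_add (hU : IsOpen U) {x : ℝ} (hx : x ∈ U) {f g : ℝ → ℝ} (n : ℕ)
    (hf : AnalyticOnNhd ℝ f U) (hg : AnalyticOnNhd ℝ g U) :
    iteratedDeriv n (fun y => f y + g y) x = iteratedDeriv n f x + iteratedDeriv n g x := by
  rw [← itdw_open n hU hx, ← itdw_open n hU hx f, ← itdw_open n hU hx g]
  exact iteratedDerivWithin_add hx hU.uniqueDiffOn
    ((hf.contDiffOn hU.uniqueDiffOn).contDiffWithinAt hx) ((hg.contDiffOn hU.uniqueDiffOn).contDiffWithinAt hx)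

lemma itd_const_mul (hU : IsOpen U) {x : ℝ} (hx : x ∈ U) {f : ℝ → ℝ} (n : ℕ) (c : ℝ)
    (hf : AnalyticOnNhd ℝ f U) :
    iteratedDeriv n (fun y => c * f y) x = c * iteratedDeriv n f x := by
  rw [← itdw_open n hU hx, ← itdw_open n hU hx f]
  exact iteratedDerivWithin_const_mul hx hU.uniqueDiffOn c ((hf.contDiffOn hU.uniqueDiffOn).contDiffWithinAt hx)

lemma itd_zero_fun (n : ℕ) (x : ℝ) : iteratedDeriv n (fun _ : ℝ => (0:ℝ)) x = 0 := by
  have : iteratedDeriv n (fun _ : ℝ => (0:ℝ)) = fun _ => 0 := by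
    induction n with
    | zero => simp [iteratedDeriv_zero]
    | succ n ih => rw [iteratedDeriv_succ, ih]; simp
  simp [this]

lemma itd_sum (hU : IsOpen U) {x : ℝ} (hx : x ∈ U) {ι : Type*} (s : Finset ι)
    (F : ι → ℝ → ℝ) (hF : ∀ i ∈ s, AnalyticOnNhd ℝ (F i) U) (n : ℕ) :
    iteratedDeriv n (fun y => ∑ i ∈ s, F i y) x = ∑ i ∈ s, iteratedDeriv n (F i) x := by
  classical
  induction s using Finset.induction with
  | empty => simpa using itd_zero_fun n x
  | insert a s hnotmem ih =>
    rw [Finset.sum_insert hnotmem]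
    have : iteratedDeriv n (fun y => ∑ i ∈ insert a s, F i y) x
        = iteratedDeriv n (fun y => F a y + ∑ i ∈ s, F i y) x := by
      congr 1; funext y; rw [Finset.sum_insert hnotmem]
    rw [this, itd_add hU hx n (hF a (Finset.mem_insert_self a s))
      (Finset.analyticOnNhd_fun_sum s (fun i hi => hF i (Finset.mem_insert_of_mem hi))),
      ih (fun i hi => hF i (Finset.mem_insert_of_mem hi))]

lemma leibniz (hU : IsOpen U) (n : ℕ) :
    ∀ (f g : ℝ → ℝ), AnalyticOnNhd ℝ f U → AnalyticOnNhd ℝ g U → ∀ x ∈ U,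
    iteratedDeriv n (fun y => f y * g y) x
      = ∑ j ∈ Finset.range (n+1), (n.choose j : ℝ) * iteratedDeriv j f x
          * iteratedDeriv (n-j) g x := by
  induction n with
  | zero => intro f g hf hg x hx; simp
  | succ n ih =>
    intro f g hf hg x hx
    rw [iteratedDeriv_succ']
    have hder : Set.EqOn (deriv (fun y => f y * g y))
        (fun y => deriv f y * g y + f y * deriv g y) U := by
      intro y hy
      exact deriv_mul ((hf y hy).differentiableAt) ((hg y hy).differentiableAt)
    rw [hder.iteratedDeriv_of_isOpen hU n hx]
    have hf' : AnalyticOnNhd ℝ (deriv f) U := hf.deriv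
    have hg' : AnalyticOnNhd ℝ (deriv g) U := hg.deriv
    rw [itd_add hU hx n (hf'.mul hg) (hf.mul hg')]
    rw [ih (deriv f) g hf' hg x hx, ih f (deriv g) hf hg' x hx]
    -- now the Pascal recombination
    have key : ∀ j, iteratedDeriv j (deriv f) x = iteratedDeriv (j+1) f x := by
      intro j; rw [iteratedDeriv_succ']
    have key2 : ∀ j, iteratedDeriv j (deriv g) x = iteratedDeriv (j+1) g x := by
      intro j; rw [iteratedDeriv_succ']
    simp only [key, key2]
    -- LHS: ∑_{j∈range (n+1)} C(n,j) f^{(j+1)} g^{(n-j)} + ∑_{j∈range (n+1)} C(n,j) f^{(j)} g^{(n-j+1)}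
    -- RHS: ∑_{j∈range (n+2)} C(n+1,j) f^{(j)} g^{(n+1-j)}
    have e1 : ∑ j ∈ Finset.range (n+1), (n.choose j : ℝ) * iteratedDeriv (j+1) f x
          * iteratedDeriv (n-j) g x
        = ∑ j ∈ Finset.range (n+2), (if j = 0 then 0 else (n.choose (j-1) : ℝ))
            * iteratedDeriv j f x * iteratedDeriv (n+1-j) g x := by
      rw [Finset.sum_range_succ' (fun j => (if j = 0 then 0 else (n.choose (j-1) : ℝ))
            * iteratedDeriv j f x * iteratedDeriv (n+1-j) g x)]
      simp only [Nat.succ_ne_zero, if_false, if_true, Nat.succ_sub_one, Nat.succ_sub_succ,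
        ite_true, eq_self_iff_true, zero_mul, add_zero, Nat.sub_zero]
    have e2 : ∑ j ∈ Finset.range (n+1), (n.choose j : ℝ) * iteratedDeriv j f x
          * iteratedDeriv (n-j+1) g x
        = ∑ j ∈ Finset.range (n+2), (n.choose j : ℝ)
            * iteratedDeriv j f x * iteratedDeriv (n+1-j) g x := by
      rw [Finset.sum_range_succ (fun j => (n.choose j : ℝ)
            * iteratedDeriv j f x * iteratedDeriv (n+1-j) g x)]
      rw [Nat.choose_succ_self]
      simp only [Nat.cast_zero, zero_mul, add_zero]
      apply Finset.sum_congr rfl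
      intro j hj
      rw [Finset.mem_range] at hj
      congr 2
      omega
    rw [e1, e2, ← Finset.sum_add_distrib]
    apply Finset.sum_congr rfl
    intro j hj
    rw [Finset.mem_range] at hj
    have : (if j = 0 then 0 else (n.choose (j-1) : ℝ)) + (n.choose j : ℝ)
        = ((n+1).choose j : ℝ) := by
      rcases Nat.eq_zero_or_pos j with h0 | h0
      · subst h0; simp
      · obtain ⟨m, rfl⟩ := Nat.exists_eq_add_of_lt h0
        simp only [Nat.zero_add, if_neg (Nat.succ_ne_zero m), Nat.succ_sub_one]
        rw [Nat.choose_succ_succ, Nat.cast_add]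
    rw [← this]; ring

lemma itd_const (c : ℝ) (n : ℕ) (x : ℝ) :
    iteratedDeriv n (fun _ : ℝ => c) x = if n = 0 then c else 0 := by
  have : iteratedDeriv n (fun _ : ℝ => c) = fun _ => if n = 0 then c else 0 := by
    induction n with
    | zero => simp [iteratedDeriv_zero]
    | succ n ih => rw [iteratedDeriv_succ, ih]; simp
  simp [this]

lemma zeroMult_eq_of {g : ℝ → ℝ} {t : ℝ} {m : ℕ} (h0 : iteratedDeriv m g t ≠ 0)
    (h1 : ∀ j < m, iteratedDeriv j g t = 0) : zeroMult g t = m := by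
  unfold zeroMult
  refine le_antisymm (Nat.sInf_le h0) ?_
  by_contra hlt
  push_neg at hlt
  exact Nat.sInf_mem (⟨m, h0⟩ : {n : ℕ | iteratedDeriv n g t ≠ 0}.Nonempty) (h1 _ hlt)

lemma zeroMult_spec {g : ℝ → ℝ} {t : ℝ} (hne : ∃ n, iteratedDeriv n g t ≠ 0) :
    iteratedDeriv (zeroMult g t) g t ≠ 0 ∧ ∀ j < zeroMult g t, iteratedDeriv j g t = 0 := by
  constructor
  · exact Nat.sInf_mem hne
  · intro j hj
    have := Nat.notMem_of_lt_sInf (s := {n : ℕ | iteratedDeriv n g t ≠ 0}) hj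
    simpa using this

lemma zeroMult_pos {g : ℝ → ℝ} {t : ℝ} (hne : ∃ n, iteratedDeriv n g t ≠ 0)
    (hg : g t = 0) : 1 ≤ zeroMult g t := by
  rcases Nat.eq_zero_or_pos (zeroMult g t) with h | h
  · exfalso
    have := (zeroMult_spec hne).1
    rw [h] at this
    exact this (by simpa [iteratedDeriv_zero] using hg)
  · exact h

lemma zeroMult_deriv {g : ℝ → ℝ} {t : ℝ} (hne : ∃ n, iteratedDeriv n g t ≠ 0)
    (h1 : 1 ≤ zeroMult g t) : zeroMult (deriv g) t = zeroMult g t - 1 := by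
  obtain ⟨hns, hlt⟩ := zeroMult_spec hne
  apply zeroMult_eq_of
  · rw [← iteratedDeriv_succ']
    have : zeroMult g t - 1 + 1 = zeroMult g t := by omega
    rw [this]; exact hns
  · intro j hj
    rw [← iteratedDeriv_succ']
    exact hlt _ (by omega)

lemma zeroMult_congr {f g : ℝ → ℝ} {t : ℝ} (hfg : f =ᶠ[𝓝 t] g) :
    zeroMult f t = zeroMult g t := by
  unfold zeroMult
  congr 1
  ext n
  simp [hfg.iteratedDeriv_eq n]

lemma itd_mul_all_zero (hU : IsOpen U) {x : ℝ} (hx : x ∈ U) {c g : ℝ → ℝ}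
    (hc : AnalyticOnNhd ℝ c U) (hg : AnalyticOnNhd ℝ g U)
    (hall : ∀ j, iteratedDeriv j g x = 0) :
    ∀ n, iteratedDeriv n (fun y => c y * g y) x = 0 := by
  intro n
  have : (fun y => c y * g y) = fun y => g y * c y := by funext y; ring
  rw [this, leibniz hU n g c hg hc x hx]
  apply Finset.sum_eq_zero
  intro j _
  rw [hall j]
  ring

lemma nonempty_shift {c g : ℝ → ℝ} {x : ℝ} (hU : IsOpen U) (hx : x ∈ U)
    (hc : AnalyticOnNhd ℝ c U) (hg : AnalyticOnNhd ℝ g U)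
    (hne : ∃ n, iteratedDeriv n (fun y => c y * g y) x ≠ 0) :
    ∃ n, iteratedDeriv n g x ≠ 0 := by
  by_contra h
  push_neg at h
  obtain ⟨n, hn⟩ := hne
  exact hn (itd_mul_all_zero hU hx hc hg h n)

lemma zeroMult_mul (hU : IsOpen U) {x : ℝ} (hx : x ∈ U) {c g : ℝ → ℝ}
    (hc : AnalyticOnNhd ℝ c U) (hg : AnalyticOnNhd ℝ g U) (hcx : c x ≠ 0) :
    zeroMult (fun y => c y * g y) x = zeroMult g x := by
  by_cases hne : ∃ n, iteratedDeriv n g x ≠ 0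
  · set m := zeroMult g x with hm
    obtain ⟨hns, hlt⟩ := zeroMult_spec hne
    apply zeroMult_eq_of
    · have e : (fun y => c y * g y) = fun y => g y * c y := by funext y; ring
      rw [e, leibniz hU m g c hg hc x hx]
      rw [Finset.sum_eq_single m]
      · simp only [Nat.choose_self, Nat.cast_one, one_mul, Nat.sub_self, iteratedDeriv_zero]
        exact mul_ne_zero hns hcx
      · intro j hj hjm
        rw [Finset.mem_range] at hj
        rw [hlt j (by omega)]
        ring
      · intro h
        exact absurd (Finset.self_mem_range_succ m) h
    · intro j hj
      have e : (fun y => c y * g y) = fun y => g y * c y := by funext y; ring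
      rw [e, leibniz hU j g c hg hc x hx]
      apply Finset.sum_eq_zero
      intro l hl
      rw [Finset.mem_range] at hl
      rw [hlt l (by omega)]
      ring
  · push_neg at hne
    have h2 : ∀ n, iteratedDeriv n (fun y => c y * g y) x = 0 :=
      itd_mul_all_zero hU hx hc hg hne
    unfold zeroMult
    have e1 : {n : ℕ | iteratedDeriv n (fun y => c y * g y) x ≠ 0} = ∅ := by
      ext n; simp [h2 n]
    have e2 : {n : ℕ | iteratedDeriv n g x ≠ 0} = ∅ := by
      ext n; simp [hne n]
    rw [e1, e2]

lemma det_smul_col (hU : IsOpen U) {x : ℝ} (hx : x ∈ U) (m : ℕ) (c : ℝ → ℝ)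
    (hc : AnalyticOnNhd ℝ c U) (v : Fin m → ℝ → ℝ) (hv : ∀ j, AnalyticOnNhd ℝ (v j) U) :
    Matrix.det (Matrix.of fun i j : Fin m => iteratedDeriv (i : ℕ) (fun y => c y * v j y) x)
      = c x ^ m * Matrix.det (Matrix.of fun i j : Fin m => iteratedDeriv (i : ℕ) (v j) x) := by
  classical
  set L : Matrix (Fin m) (Fin m) ℝ := Matrix.of fun i l : Fin m =>
    if (l : ℕ) ≤ (i : ℕ) then ((i : ℕ).choose l : ℝ) * iteratedDeriv ((i : ℕ) - (l : ℕ)) c x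
    else 0 with hL
  set D : Matrix (Fin m) (Fin m) ℝ :=
    Matrix.of (fun l j : Fin m => iteratedDeriv (l : ℕ) (v j) x) with hD
  have hM : (Matrix.of fun i j : Fin m => iteratedDeriv (i : ℕ) (fun y => c y * v j y) x)
      = L * D := by
    ext i j
    rw [Matrix.mul_apply]
    have e : (fun y => c y * v j y) = fun y => v j y * c y := by funext y; ring
    rw [Matrix.of_apply, e, leibniz hU (i : ℕ) (v j) c (hv j) hc x hx]
    have hrw : ∀ l : Fin m, L i l * D l j =
        (fun l : ℕ => if l ≤ (i : ℕ) then ((i : ℕ).choose l : ℝ)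
          * iteratedDeriv ((i : ℕ) - l) c x * iteratedDeriv l (v j) x else 0) (l : ℕ) := by
      intro l
      simp only [hL, hD, Matrix.of_apply, ite_mul, zero_mul]
    rw [Finset.sum_congr rfl (fun l _ => hrw l),
      Fin.sum_univ_eq_sum_range (fun l : ℕ => if l ≤ (i : ℕ) then ((i : ℕ).choose l : ℝ)
          * iteratedDeriv ((i : ℕ) - l) c x * iteratedDeriv l (v j) x else 0) m]
    rw [← Finset.sum_subset (Finset.range_subset_range.2 i.isLt)
      (fun l _ hl => by rw [if_neg (by simp at hl ⊢; omega)])]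
    apply Finset.sum_congr rfl
    intro l hl
    rw [Finset.mem_range] at hl
    rw [if_pos (by omega)]
    ring
  rw [hM, Matrix.det_mul]
  congr 1
  have hLdet : L.det = ∏ i : Fin m, L i i := by
    apply Matrix.det_of_lowerTriangular
    intro i j hij
    have : (i : ℕ) < (j : ℕ) := hij
    simp only [hL, Matrix.of_apply]
    rw [if_neg (by omega)]
  rw [hLdet]
  have : ∀ i : Fin m, L i i = c x := by
    intro i
    simp [hL, Nat.choose_self]
  rw [Finset.prod_congr rfl (fun i _ => this i), Finset.prod_const, Finset.card_univ,
    Fintype.card_fin]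

lemma det_expand_first (m : ℕ) (x : ℝ) (w : Fin (m+1) → ℝ → ℝ)
    (hw0 : w 0 =ᶠ[𝓝 x] fun _ => (1:ℝ)) :
    Matrix.det (Matrix.of fun i j : Fin (m+1) => iteratedDeriv (i : ℕ) (w j) x)
      = Matrix.det (Matrix.of fun i j : Fin m =>
          iteratedDeriv ((i : ℕ)+1) (w j.succ) x) := by
  classical
  set A : Matrix (Fin (m+1)) (Fin (m+1)) ℝ :=
    Matrix.of (fun i j : Fin (m+1) => iteratedDeriv (i : ℕ) (w j) x) with hA
  have hcol : ∀ i : Fin (m+1), A i 0 = if (i : ℕ) = 0 then 1 else 0 := by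
    intro i
    simp only [hA, Matrix.of_apply]
    rw [hw0.iteratedDeriv_eq, itd_const]
  rw [Matrix.det_succ_column_zero]
  rw [Finset.sum_eq_single (0 : Fin (m+1))]
  · rw [hcol 0]
    simp only [Fin.val_zero, pow_zero, if_pos rfl, one_mul, Fin.succAbove_zero, if_true]
    rfl
  · intro i _ hi
    rw [hcol i, if_neg (Fin.val_ne_zero_iff.mpr hi)]
    ring
  · intro h
    exact absurd (Finset.mem_univ _) h

lemma nondeg (hU : IsOpen U) {k : ℕ} (F : Fin k → ℝ → ℝ)
    (hF : ∀ j, AnalyticOnNhd ℝ (F j) U) (γ : Fin k → ℝ) (hγ : γ ≠ 0) {t : ℝ} (ht : t ∈ U)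
    (hdet : Matrix.det (Matrix.of fun i j : Fin k => iteratedDeriv (i : ℕ) (F j) t) ≠ 0) :
    ∃ n, iteratedDeriv n (fun y => ∑ j, γ j * F j y) t ≠ 0 := by
  by_contra h
  push_neg at h
  apply hγ
  apply Matrix.eq_zero_of_mulVec_eq_zero hdet
  funext i
  have : ∀ j : Fin k, AnalyticOnNhd ℝ (fun y => γ j * F j y) U := fun j =>
    (analyticOnNhd_const).mul (hF j)
  calc (Matrix.mulVec (Matrix.of fun i j : Fin k => iteratedDeriv (i : ℕ) (F j) t) γ) i
      = ∑ j, iteratedDeriv (i : ℕ) (F j) t * γ j := by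
        simp [Matrix.mulVec, dotProduct]
    _ = ∑ j, iteratedDeriv (i : ℕ) (fun y => γ j * F j y) t := by
        apply Finset.sum_congr rfl
        intro j _
        rw [itd_const_mul hU ht (i : ℕ) (γ j) (hF j)]
        ring
    _ = iteratedDeriv (i : ℕ) (fun y => ∑ j, γ j * F j y) t := by
        rw [itd_sum hU ht Finset.univ (fun j y => γ j * F j y) (fun j _ => this j)]
    _ = 0 := h _

lemma rolle_count (a b : ℝ) (φ : ℝ → ℝ) (hφ : AnalyticOnNhd ℝ φ (Set.Ioo a b))
    (hnd : ∀ t ∈ Set.Ioo a b, ∃ n, iteratedDeriv n φ t ≠ 0)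
    (hnd' : ∀ t ∈ Set.Ioo a b, ∃ n, iteratedDeriv n (deriv φ) t ≠ 0) :
    ∀ (N : ℕ) (s : Finset ℝ), s.card ≤ N → (↑s : Set ℝ) ⊆ Set.Ioo a b →
      (∀ t ∈ s, φ t = 0) →
    ∃ s' : Finset ℝ, (↑s' : Set ℝ) ⊆ Set.Ioo a b ∧ (∀ t ∈ s', deriv φ t = 0) ∧
      (∀ t ∈ s', ∃ u ∈ s, t ≤ u) ∧
      ∑ t ∈ s, zeroMult φ t ≤ ∑ t ∈ s', zeroMult (deriv φ) t + 1 := by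
  classical
  intro N
  induction N with
  | zero =>
    intro s hcard _ _
    have : s = ∅ := Finset.card_eq_zero.mp (Nat.le_zero.mp hcard)
    subst this
    exact ⟨∅, by simp, by simp, by simp, by simp⟩
  | succ N IH =>
    intro s hcard hsub hzero
    rcases s.eq_empty_or_nonempty with rfl | hne
    · exact ⟨∅, by simp, by simp, by simp, by simp⟩
    set M := s.max' hne with hM
    have hMs : M ∈ s := s.max'_mem hne
    have hMIoo : M ∈ Set.Ioo a b := hsub hMs
    have hmM : 1 ≤ zeroMult φ M := zeroMult_pos (hnd M hMIoo) (hzero M hMs)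
    have hderM : zeroMult (deriv φ) M = zeroMult φ M - 1 :=
      zeroMult_deriv (hnd M hMIoo) hmM
    have hsum_split : ∑ t ∈ s, zeroMult φ t
        = zeroMult φ M + ∑ t ∈ s.erase M, zeroMult φ t :=
      (Finset.add_sum_erase s _ hMs).symm
    set s₀ := s.erase M with hs₀
    have hcard₀ : s₀.card ≤ N := by
      have h1 := Finset.card_erase_of_mem hMs
      rw [← hs₀] at h1
      have h2 := Finset.card_pos.mpr hne
      omega
    have hsub₀ : (↑s₀ : Set ℝ) ⊆ Set.Ioo a b :=
      Set.Subset.trans (by exact_mod_cast Finset.coe_subset.mpr (Finset.erase_subset M s)) hsub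
    have hzero₀ : ∀ t ∈ s₀, φ t = 0 := fun t ht => hzero t (Finset.mem_of_mem_erase ht)
    obtain ⟨s₀', hsub', hzero', hle', hsum'⟩ := IH s₀ hcard₀ hsub₀ hzero₀
    rcases s₀.eq_empty_or_nonempty with h₀ | hne₀
    · -- s = {M}
      have hsum0 : ∑ t ∈ s₀, zeroMult φ t = 0 := by rw [h₀]; simp
      by_cases h2 : 2 ≤ zeroMult φ M
      · refine ⟨{M}, by simpa using hMIoo, ?_, ?_, ?_⟩
        · intro t ht
          rw [Finset.mem_singleton] at ht
          subst ht
          have := (zeroMult_spec (hnd M hMIoo)).2 1 (by omega)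
          rwa [iteratedDeriv_one] at this
        · intro t ht
          rw [Finset.mem_singleton] at ht
          exact ⟨M, hMs, le_of_eq ht⟩
        · rw [hsum_split, hsum0, Finset.sum_singleton, hderM]
          omega
      · refine ⟨∅, by simp, by simp, by simp, ?_⟩
        rw [hsum_split, hsum0]
        simp
        omega
    · -- s₀ nonempty: Rolle between M₀ and M
      set M₀ := s₀.max' hne₀ with hM₀
      have hM₀s₀ : M₀ ∈ s₀ := s₀.max'_mem hne₀
      have hM₀s : M₀ ∈ s := Finset.mem_of_mem_erase hM₀s₀
      have hM₀Ioo : M₀ ∈ Set.Ioo a b := hsub hM₀s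
      have hM₀M : M₀ < M := by
        have h1 : M₀ ≤ M := s.le_max' M₀ hM₀s
        have h2 : M₀ ≠ M := Finset.ne_of_mem_erase hM₀s₀
        exact lt_of_le_of_ne h1 h2
      have hIcc : Set.Icc M₀ M ⊆ Set.Ioo a b := by
        intro y hy
        exact ⟨lt_of_lt_of_le hM₀Ioo.1 hy.1, lt_of_le_of_lt hy.2 hMIoo.2⟩
      have hcont : ContinuousOn φ (Set.Icc M₀ M) :=
        (hφ.continuousOn).mono hIcc
      obtain ⟨c, hcIoo, hc⟩ := exists_deriv_eq_zero hM₀M hcont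
        ((hzero M₀ hM₀s).trans (hzero M hMs).symm)
      have hcIooab : c ∈ Set.Ioo a b :=
        ⟨lt_trans hM₀Ioo.1 hcIoo.1, lt_trans hcIoo.2 hMIoo.2⟩
      have hzmc : 1 ≤ zeroMult (deriv φ) c :=
        zeroMult_pos (hnd' c hcIooab) hc
      have hbound' : ∀ t ∈ s₀', t ≤ M₀ := by
        intro t ht
        obtain ⟨u, hu, htu⟩ := hle' t ht
        exact le_trans htu (s₀.le_max' u hu)
      have hcns : c ∉ s₀' := fun h => absurd (hbound' c h) (not_le.mpr hcIoo.1)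
      have hMns : M ∉ s₀' := fun h => absurd (hbound' M h) (not_le.mpr hM₀M)
      have hcM : c ≠ M := ne_of_lt hcIoo.2
      set s'' : Finset ℝ := if 2 ≤ zeroMult φ M then insert M s₀' else s₀' with hs''
      have hcns'' : c ∉ s'' := by
        rw [hs'']
        split
        · rw [Finset.mem_insert]
          push_neg
          exact ⟨hcM, hcns⟩
        · exact hcns
      refine ⟨insert c s'', ?_, ?_, ?_, ?_⟩
      · intro y hy
        simp only [Finset.coe_insert, Set.mem_insert_iff] at hy
        rcases hy with heq | hy
        · rw [heq]; exact hcIooab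
        · rw [hs''] at hy
          split at hy
          · simp only [Finset.coe_insert, Set.mem_insert_iff] at hy
            rcases hy with heq | hy
            · rw [heq]; exact hMIoo
            · exact hsub' hy
          · exact hsub' hy
      · intro t ht
        rw [Finset.mem_insert] at ht
        rcases ht with heq | ht
        · rw [heq]; exact hc
        · rw [hs''] at ht
          by_cases h2 : 2 ≤ zeroMult φ M
          · rw [if_pos h2, Finset.mem_insert] at ht
            rcases ht with heq | ht
            · have := (zeroMult_spec (hnd M hMIoo)).2 1 (by omega)
              rw [iteratedDeriv_one] at this
              rw [heq]
              exact this
            · exact hzero' t ht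
          · rw [if_neg h2] at ht
            exact hzero' t ht
      · intro t ht
        refine ⟨M, hMs, ?_⟩
        rw [Finset.mem_insert] at ht
        rcases ht with heq | ht
        · rw [heq]; exact le_of_lt hcIoo.2
        · rw [hs''] at ht
          by_cases h2 : 2 ≤ zeroMult φ M
          · rw [if_pos h2, Finset.mem_insert] at ht
            rcases ht with heq | ht
            · exact le_of_eq heq
            · exact le_trans (hbound' t ht) (le_of_lt hM₀M)
          · rw [if_neg h2] at ht
            exact le_trans (hbound' t ht) (le_of_lt hM₀M)
      · rw [Finset.sum_insert hcns'', hsum_split]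
        by_cases h2 : 2 ≤ zeroMult φ M
        · rw [hs'', if_pos h2, Finset.sum_insert hMns, hderM]
          omega
        · rw [hs'', if_neg h2]
          omega

lemma main (a b : ℝ) (k : ℕ) (hk1 : 1 ≤ k) :
    ∀ (f : Fin k → ℝ → ℝ),
    (∀ i, AnalyticOnNhd ℝ (f i) (Set.Ioo a b)) →
    (∀ (m : ℕ), 1 ≤ m → ∀ (hmk : m ≤ k), ∀ t ∈ Set.Ioo a b,
      Matrix.det (Matrix.of fun i j : Fin m =>
        iteratedDeriv (i : ℕ) (f (Fin.castLE hmk j)) t) ≠ 0) →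
    ∀ α : Fin k → ℝ, α ≠ 0 →
    ∀ s : Finset ℝ, (↑s : Set ℝ) ⊆ Set.Ioo a b →
      (∀ t ∈ s, (∑ i, α i * f i t) = 0) →
      ∑ t ∈ s, zeroMult (fun y => ∑ i, α i * f i y) t ≤ k - 1 := by
  have hU : IsOpen (Set.Ioo a b) := isOpen_Ioo
  induction k, hk1 using Nat.le_induction with
  | base =>
    intro f hf hW α hα s hsub hzero
    have h0 : ∀ t ∈ Set.Ioo a b, f 0 t ≠ 0 := by
      intro t ht
      have := hW 1 le_rfl le_rfl t ht
      rw [Matrix.det_fin_one] at this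
      have e : Fin.castLE (le_refl 1) (0 : Fin 1) = (0 : Fin 1) := rfl
      simpa [e] using this
    have hα0 : α 0 ≠ 0 := by
      intro h
      apply hα
      funext i
      rw [Subsingleton.elim i 0, h]
      rfl
    have hs : s = ∅ := by
      by_contra hne
      obtain ⟨t, ht⟩ := Finset.nonempty_of_ne_empty hne
      have := hzero t ht
      rw [Fin.sum_univ_one] at this
      exact (mul_ne_zero hα0 (h0 t (hsub ht))) this
    subst hs
    simp
  | succ k hk IH =>
    intro f hf hW α hα s hsub hzero
    set U := Set.Ioo a b with hUdef
    have hf0 : ∀ t ∈ U, f 0 t ≠ 0 := by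
      intro t ht
      have := hW 1 le_rfl (by omega) t ht
      rw [Matrix.det_fin_one] at this
      have e : Fin.castLE (show 1 ≤ k+1 by omega) (0 : Fin 1) = (0 : Fin (k+1)) := by
        ext; simp
      simpa [e] using this
    have hev0 : ∀ t ∈ U, ∀ᶠ y in 𝓝 t, f 0 y ≠ 0 := fun t ht =>
      ((hf 0 t ht).continuousAt).eventually_ne (hf0 t ht)
    set g : ℝ → ℝ := fun y => ∑ i, α i * f i y with hgdef
    have hgan : AnalyticOnNhd ℝ g U :=
      Finset.analyticOnNhd_fun_sum Finset.univ (fun i _ => analyticOnNhd_const.mul (hf i))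
    set u : Fin k → ℝ → ℝ := fun j y => f j.succ y / f 0 y with hudef
    have huan : ∀ j, AnalyticOnNhd ℝ (u j) U := fun j => (hf j.succ).div (hf 0) hf0
    set h : Fin k → ℝ → ℝ := fun j => deriv (u j) with hhdef
    have hhan : ∀ j, AnalyticOnNhd ℝ (h j) U := fun j => (huan j).deriv
    set β : Fin k → ℝ := fun j => α j.succ with hβdef
    set φ : ℝ → ℝ := fun y => g y / f 0 y with hφdef
    have hφan : AnalyticOnNhd ℝ φ U := hgan.div (hf 0) hf0
    set ψ : ℝ → ℝ := fun y => ∑ j, β j * h j y with hψdef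
    have hψan : AnalyticOnNhd ℝ ψ U :=
      Finset.analyticOnNhd_fun_sum Finset.univ (fun j _ => analyticOnNhd_const.mul (hhan j))
    by_cases hβ : β = 0
    · -- trivial case: g = α 0 * f 0
      have hα0 : α 0 ≠ 0 := by
        intro h0
        apply hα
        funext i
        refine Fin.cases ?_ ?_ i
        · exact h0
        · intro j
          exact congrFun hβ j
      have hgeq : ∀ y, g y = α 0 * f 0 y := by
        intro y
        show (∑ i, α i * f i y) = α 0 * f 0 y
        rw [Fin.sum_univ_succ]
        have : ∀ j : Fin k, α j.succ * f j.succ y = 0 := by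
          intro j
          have : α j.succ = 0 := congrFun hβ j
          rw [this]; ring
        rw [Finset.sum_congr rfl (fun j _ => this j)]
        simp
      have hs : s = ∅ := by
        by_contra hne
        obtain ⟨t, ht⟩ := Finset.nonempty_of_ne_empty hne
        have h1 : g t = 0 := hzero t ht
        rw [hgeq t] at h1
        exact (mul_ne_zero hα0 (hf0 t (hsub ht))) h1
      subst hs
      simp
    · -- main case
      -- Wronskians of the reduced system
      have hWh : ∀ (m : ℕ), 1 ≤ m → ∀ (hmk : m ≤ k), ∀ t ∈ U,
          Matrix.det (Matrix.of fun i j : Fin m =>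
            iteratedDeriv (i : ℕ) (h (Fin.castLE hmk j)) t) ≠ 0 := by
        intro m hm1 hmk t ht
        have m1 : m + 1 ≤ k + 1 := by omega
        have hWt := hW (m+1) (by omega) m1 t ht
        set w : Fin (m+1) → ℝ → ℝ := fun j y => f (Fin.castLE m1 j) y / f 0 y with hwdef
        have hwan : ∀ j, AnalyticOnNhd ℝ (w j) U := fun j =>
          (hf (Fin.castLE m1 j)).div (hf 0) hf0
        have hev : ∀ j : Fin (m+1),
            (f (Fin.castLE m1 j)) =ᶠ[𝓝 t] fun y => f 0 y * w j y := by
          intro j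
          filter_upwards [hev0 t ht] with y hy
          show f (Fin.castLE m1 j) y = f 0 y * (f (Fin.castLE m1 j) y / f 0 y)
          field_simp
        have step1 : Matrix.det (Matrix.of fun i j : Fin (m+1) =>
              iteratedDeriv (i : ℕ) (f (Fin.castLE m1 j)) t)
            = Matrix.det (Matrix.of fun i j : Fin (m+1) =>
              iteratedDeriv (i : ℕ) (fun y => f 0 y * w j y) t) := by
          congr 1
          ext i j
          exact (hev j).iteratedDeriv_eq (i : ℕ)
        have step2 := det_smul_col hU ht (m+1) (f 0) (hf 0) w hwan
        have hw0 : w 0 =ᶠ[𝓝 t] fun _ => (1:ℝ) := by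
          filter_upwards [hev0 t ht] with y hy
          show f (Fin.castLE m1 0) y / f 0 y = 1
          have e0 : Fin.castLE m1 (0 : Fin (m+1)) = (0 : Fin (k+1)) := by ext; simp
          rw [e0]
          exact div_self hy
        have step3 := det_expand_first m t w hw0
        have step4 : (Matrix.of fun i j : Fin m =>
              iteratedDeriv ((i : ℕ)+1) (w j.succ) t)
            = Matrix.of fun i j : Fin m =>
              iteratedDeriv (i : ℕ) (h (Fin.castLE hmk j)) t := by
          ext i j
          have e1 : Fin.castLE m1 j.succ = (Fin.castLE hmk j).succ := by
            ext; simp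
          have e2 : w j.succ = u (Fin.castLE hmk j) := by
            funext y
            show f (Fin.castLE m1 j.succ) y / f 0 y = f ((Fin.castLE hmk j).succ) y / f 0 y
            rw [e1]
          rw [Matrix.of_apply, Matrix.of_apply, e2, ← iteratedDeriv_succ']
        intro hcontra
        rw [step1, step2, step3, step4, hcontra, mul_zero] at hWt
        exact hWt rfl
      have hβne : ∀ t ∈ U, ∃ n, iteratedDeriv n ψ t ≠ 0 := by
        intro t ht
        have hdet := hWh k hk le_rfl t ht
        have e : (Matrix.of fun i j : Fin k =>
            iteratedDeriv (i : ℕ) (h (Fin.castLE le_rfl j)) t)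
            = Matrix.of fun i j : Fin k => iteratedDeriv (i : ℕ) (h j) t := by
          ext i j
          congr 2
        rw [e] at hdet
        exact nondeg hU h hhan β hβ ht hdet
      have hndg : ∀ t ∈ U, ∃ n, iteratedDeriv n g t ≠ 0 := by
        intro t ht
        have hdet := hW (k+1) (by omega) le_rfl t ht
        have e : (Matrix.of fun i j : Fin (k+1) =>
            iteratedDeriv (i : ℕ) (f (Fin.castLE le_rfl j)) t)
            = Matrix.of fun i j : Fin (k+1) => iteratedDeriv (i : ℕ) (f j) t := by
          ext i j
          congr 2
        rw [e] at hdet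
        exact nondeg hU f hf α hα ht hdet
      have hφg : ∀ t ∈ U, g =ᶠ[𝓝 t] fun y => f 0 y * φ y := by
        intro t ht
        filter_upwards [hev0 t ht] with y hy
        show g y = f 0 y * (g y / f 0 y)
        field_simp
      have hndφ : ∀ t ∈ U, ∃ n, iteratedDeriv n φ t ≠ 0 := by
        intro t ht
        apply nonempty_shift hU ht (hf 0) hφan
        obtain ⟨n, hn⟩ := hndg t ht
        exact ⟨n, by rwa [← (hφg t ht).iteratedDeriv_eq n]⟩
      have hmult : ∀ t ∈ U, zeroMult g t = zeroMult φ t := by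
        intro t ht
        rw [zeroMult_congr (hφg t ht)]
        exact zeroMult_mul hU ht (hf 0) hφan (hf0 t ht)
      have hφeq : ∀ t ∈ U, φ =ᶠ[𝓝 t] fun y => α 0 + ∑ j, β j * u j y := by
        intro t ht
        filter_upwards [hev0 t ht] with y hy
        show (∑ i, α i * f i y) / f 0 y = α 0 + ∑ j, β j * u j y
        rw [Fin.sum_univ_succ, add_div]
        congr 1
        · exact mul_div_cancel_right₀ (α 0) hy
        · rw [Finset.sum_div]
          apply Finset.sum_congr rfl
          intro j _
          rw [mul_div_assoc]
      have hderφψ : ∀ t ∈ U, deriv φ t = ψ t := by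
        intro t ht
        rw [Filter.EventuallyEq.deriv_eq (hφeq t ht)]
        rw [deriv_const_add]
        rw [deriv_fun_sum (fun j _ => ((huan j t ht).differentiableAt).const_mul (β j))]
        show ∑ j : Fin k, deriv (fun y => β j * u j y) t = ∑ j : Fin k, β j * h j t
        apply Finset.sum_congr rfl
        intro j _
        rw [deriv_const_mul _ ((huan j t ht).differentiableAt)]
      have hdψev : ∀ t ∈ U, deriv φ =ᶠ[𝓝 t] ψ := fun t ht =>
        Filter.eventuallyEq_of_mem (hU.mem_nhds ht) (fun y hy => hderφψ y hy)
      have hnddφ : ∀ t ∈ U, ∃ n, iteratedDeriv n (deriv φ) t ≠ 0 := by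
        intro t ht
        obtain ⟨n, hn⟩ := hβne t ht
        exact ⟨n, by rwa [(hdψev t ht).iteratedDeriv_eq n]⟩
      have hzeroφ : ∀ t ∈ s, φ t = 0 := by
        intro t ht
        have h1 : g t = 0 := hzero t ht
        show g t / f 0 t = 0
        rw [h1, zero_div]
      obtain ⟨s', hsub', hzero', _, hsum'⟩ :=
        rolle_count a b φ hφan hndφ hnddφ s.card s le_rfl hsub hzeroφ
      have hψzero : ∀ t ∈ s', ψ t = 0 := fun t ht =>
        (hderφψ t (hsub' ht)).symm.trans (hzero' t ht)
      have hIH := IH h hhan hWh β hβ s' hsub' (fun t ht => hψzero t ht)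
      have e1 : ∑ t ∈ s, zeroMult g t = ∑ t ∈ s, zeroMult φ t :=
        Finset.sum_congr rfl (fun t ht => hmult t (hsub ht))
      have e2 : ∑ t ∈ s', zeroMult (deriv φ) t = ∑ t ∈ s', zeroMult ψ t :=
        Finset.sum_congr rfl (fun t ht => zeroMult_congr (hdψev t (hsub' ht)))
      have e3 : ∑ t ∈ s', zeroMult ψ t ≤ k - 1 := hIH
      calc ∑ t ∈ s, zeroMult (fun y => ∑ i, α i * f i y) t
          = ∑ t ∈ s, zeroMult φ t := e1
        _ ≤ ∑ t ∈ s', zeroMult (deriv φ) t + 1 := hsum'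
        _ = ∑ t ∈ s', zeroMult ψ t + 1 := by rw [e2]
        _ ≤ (k - 1) + 1 := by omega
        _ ≤ (k + 1) - 1 := by omega

end ECT

theorem stmt_10 (n : ℕ) (a b : ℝ) (f : Fin n → ℝ → ℝ)
    (hf : ∀ i, AnalyticOnNhd ℝ (f i) (Set.Ioo a b))
    (hW : ∀ k : ℕ, 1 ≤ k → ∀ hkn : k ≤ n, ∀ t ∈ Set.Ioo a b,
      (Matrix.det (fun i j : Fin k => iteratedDeriv (i : ℕ)
        (f ⟨(j : ℕ), lt_of_lt_of_le j.2 hkn⟩) t)) ≠ 0) :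
    ∀ k : ℕ, 1 ≤ k → k ≤ n → ∀ α : Fin n → ℝ,
      (∃ i : Fin n, (i : ℕ) < k ∧ α i ≠ 0) →
      ZerosWithMultLE (fun t => ∑ i : Fin n, if (i : ℕ) < k then α i * f i t else 0)
        (Set.Ioo a b) (k - 1) := by
  intro k hk1 hkn α ⟨i, hik, hαi⟩
  set f' : Fin k → ℝ → ℝ := fun j => f (Fin.castLE hkn j) with hf'def
  set α' : Fin k → ℝ := fun j => α (Fin.castLE hkn j) with hα'def
  have heq : (fun t => ∑ i : Fin n, if (i : ℕ) < k then α i * f i t else 0)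
      = fun t => ∑ j : Fin k, α' j * f' j t := by
    funext t
    set G : ℕ → ℝ := fun i =>
      if h : i < n then (if i < k then α ⟨i, h⟩ * f ⟨i, h⟩ t else 0) else 0 with hG
    have h1 : ∀ i : Fin n, (if (i : ℕ) < k then α i * f i t else 0) = G (i : ℕ) := by
      intro i
      simp only [hG]
      rw [dif_pos i.isLt]
    have h2 : ∀ j : Fin k, α' j * f' j t = G (j : ℕ) := by
      intro j
      simp only [hG]
      rw [dif_pos (lt_of_lt_of_le j.isLt hkn), if_pos j.isLt]
      rfl
    calc ∑ i : Fin n, (if (i : ℕ) < k then α i * f i t else 0)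
        = ∑ i : Fin n, G (i : ℕ) := Finset.sum_congr rfl (fun i _ => h1 i)
      _ = ∑ i ∈ Finset.range n, G i := Fin.sum_univ_eq_sum_range G n
      _ = ∑ i ∈ Finset.range k, G i := by
          refine (Finset.sum_subset (Finset.range_subset_range.2 hkn) ?_).symm
          intro x _ hx
          rw [Finset.mem_range] at hx
          simp [hG, hx]
      _ = ∑ j : Fin k, G (j : ℕ) := (Fin.sum_univ_eq_sum_range G k).symm
      _ = ∑ j : Fin k, α' j * f' j t := Finset.sum_congr rfl (fun j _ => (h2 j).symm)
  have hα' : α' ≠ 0 := by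
    intro h0
    apply hαi
    have e : Fin.castLE hkn ⟨(i : ℕ), hik⟩ = i := by ext; rfl
    have := congrFun h0 ⟨(i : ℕ), hik⟩
    rw [hα'def] at this
    simpa [e] using this
  have hf' : ∀ j, AnalyticOnNhd ℝ (f' j) (Set.Ioo a b) := fun j => hf _
  have hW' : ∀ (m : ℕ), 1 ≤ m → ∀ (hmk : m ≤ k), ∀ t ∈ Set.Ioo a b,
      Matrix.det (Matrix.of fun i j : Fin m =>
        iteratedDeriv (i : ℕ) (f' (Fin.castLE hmk j)) t) ≠ 0 := by
    intro m hm1 hmk t ht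
    have := hW m hm1 (le_trans hmk hkn) t ht
    have e : (Matrix.of fun i j : Fin m =>
        iteratedDeriv (i : ℕ) (f' (Fin.castLE hmk j)) t)
        = fun i j : Fin m => iteratedDeriv (i : ℕ)
          (f ⟨(j : ℕ), lt_of_lt_of_le j.2 (le_trans hmk hkn)⟩) t := by
      ext i j
      have : f' (Fin.castLE hmk j) = f ⟨(j : ℕ), lt_of_lt_of_le j.2 (le_trans hmk hkn)⟩ := by
        rw [hf'def]
        congr 1
      rw [Matrix.of_apply, this]
    rw [e]
    exact this
  intro s hsub hzero
  have hzero' : ∀ t ∈ s, (∑ j, α' j * f' j t) = 0 := by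
    intro t ht
    have := hzero t ht
    calc (∑ j, α' j * f' j t) = ∑ i : Fin n, (if (i : ℕ) < k then α i * f i t else 0) :=
          (congrFun heq t).symm
      _ = 0 := this
  have hzm : ∀ t, zeroMult (fun t => ∑ i : Fin n, if (i : ℕ) < k then α i * f i t else 0) t
      = zeroMult (fun y => ∑ j, α' j * f' j y) t := fun t => by rw [heq]
  rw [Finset.sum_congr rfl (fun t _ => hzm t)]
  exact ECT.main a b k hk1 f' hf' hW' α' hα' s hsub hzero'
end

section
/- Fix β ∈ ℝ ∖ ℤ_{≥0} and an integer k ≥ 0. For y with 1+y−cos t > 0 on [0,π], let G(t,y) = (1+y−cos t)^β. Then the discrete Wronskian D[G, ∂_y G, …, ∂_y^k G; t₀,…,t_k](y) = det( ∂_y^j G(t_i,y) )_{0≤i,j≤k} equals (−1)^{k(k+1)/2} ∏_{j=0}^{k−1} (β−j)^{k−j} · ∏_{i=0}^{k} g(t_i,y)^{β−k} · ∏_{0≤i<j≤k} ( g(t_j,y) − g(t_i,y) ), where g(t,y) = 1+y−cos t; in particular it is nonzero whenever 0 < t₀ < ⋯ < t_k < π. -/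
open Real Finset


open Real Finset

lemma aux_deriv (c β : ℝ) : ∀ (j : ℕ) (y : ℝ), 0 < 1 + y - c →
    iteratedDeriv j (fun y' => (1 + y' - c) ^ β) y
      = (∏ m ∈ Finset.range j, (β - (m : ℕ))) * (1 + y - c) ^ (β - (j : ℕ)) := by
  intro j
  induction j with
  | zero => intro y hy; simp
  | succ j ih =>
    intro y hy
    rw [iteratedDeriv_succ]
    have hopen : ∀ᶠ y' in nhds y, 0 < 1 + y' - c := by
      have ho : IsOpen {y' : ℝ | 0 < 1 + y' - c} :=
        isOpen_lt continuous_const (by continuity)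
      exact ho.mem_nhds hy
    have hev : iteratedDeriv j (fun y' => (1 + y' - c) ^ β)
        =ᶠ[nhds y] fun y' => (∏ m ∈ Finset.range j, (β - (m : ℕ))) * (1 + y' - c) ^ (β - (j : ℕ)) := by
      filter_upwards [hopen] with y' hy' using ih y' hy'
    rw [hev.deriv_eq]
    have h1 : HasDerivAt (fun y' : ℝ => 1 + y' - c) 1 y := by
      simpa using ((hasDerivAt_id y).const_add 1).sub_const c
    have hd : HasDerivAt (fun y' : ℝ => (1 + y' - c) ^ (β - (j : ℕ)))
        ((β - (j : ℕ)) * (1 + y - c) ^ (β - (j : ℕ) - 1) * 1) y :=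
      by have := (Real.hasDerivAt_rpow_const (p := β - (j : ℕ)) (Or.inl hy.ne')).comp y h1; exact this
    rw [(hd.const_mul _).deriv]
    rw [Finset.prod_range_succ]
    have : β - (j : ℕ) - 1 = β - ((j : ℕ) + 1 : ℕ) := by push_cast; ring
    rw [this]
    push_cast
    ring

open Real Finset

lemma prod_rev_pairs (n : ℕ) (f : Fin n → ℝ) :
    (∏ i : Fin n, ∏ j ∈ Finset.Ioi i, (f (Fin.rev j) - f (Fin.rev i)))
      = ∏ i : Fin n, ∏ j ∈ Finset.Ioi i, (f i - f j) := by
  rw [Finset.prod_sigma', Finset.prod_sigma']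
  refine Finset.prod_nbij' (fun p : Σ _ : Fin n, Fin n => (⟨Fin.rev p.2, Fin.rev p.1⟩ : Σ _ : Fin n, Fin n))
    (fun p : Σ _ : Fin n, Fin n => (⟨Fin.rev p.2, Fin.rev p.1⟩ : Σ _ : Fin n, Fin n)) ?_ ?_ ?_ ?_ ?_
  · rintro ⟨i, j⟩ h
    simp only [Finset.mem_sigma, Finset.mem_univ, Finset.mem_Ioi, true_and] at h ⊢
    exact Fin.rev_lt_rev.mpr h
  · rintro ⟨i, j⟩ h
    simp only [Finset.mem_sigma, Finset.mem_univ, Finset.mem_Ioi, true_and] at h ⊢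
    exact Fin.rev_lt_rev.mpr h
  · rintro ⟨i, j⟩ _; simp
  · rintro ⟨i, j⟩ _; simp
  · rintro ⟨i, j⟩ _; simp

lemma count_pairs (k : ℕ) :
    (∑ i : Fin (k + 1), (Finset.Ioi i).card) = k * (k + 1) / 2 := by
  have h1 : ∀ i : Fin (k + 1), (Finset.Ioi i).card = k - i := by
    intro i; rw [Fin.card_Ioi]; omega
  simp_rw [h1]
  rw [Fin.sum_univ_eq_sum_range (fun i => k - i)]
  have := Finset.sum_range_reflect (fun i => i) (k + 1)
  simp only [Nat.add_sub_cancel] at this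
  rw [this, Finset.sum_range_id]
  simp [mul_comm]

lemma sign_flip (n : ℕ) (f : Fin n → ℝ) :
    (∏ i : Fin n, ∏ j ∈ Finset.Ioi i, (f i - f j))
      = (-1 : ℝ) ^ (∑ i : Fin n, (Finset.Ioi i).card) *
        ∏ i : Fin n, ∏ j ∈ Finset.Ioi i, (f j - f i) := by
  have h : ∀ i : Fin n, (∏ j ∈ Finset.Ioi i, (f i - f j))
      = (-1 : ℝ) ^ (Finset.Ioi i).card * ∏ j ∈ Finset.Ioi i, (f j - f i) := by
    intro i
    rw [← Finset.prod_const, ← Finset.prod_mul_distrib]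
    congr 1; ext j; ring
  simp_rw [h]
  rw [Finset.prod_mul_distrib, Finset.prod_pow_eq_pow_sum]

open Real Finset

lemma col_coeff (F : ℕ → ℝ) (n : ℕ) :
    (∏ j ∈ Finset.range (n + 1), ∏ m ∈ Finset.range j, F m)
      = ∏ m ∈ Finset.range n, F m ^ (n - m) := by
  induction n with
  | zero => simp
  | succ n ih =>
    rw [Finset.prod_range_succ, ih]
    have h : ∀ m ∈ Finset.range (n + 1), F m ^ (n + 1 - m) = F m ^ (n - m) * F m := by
      intro m hm; rw [Finset.mem_range] at hm
      rw [← pow_succ]; congr 1; omega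
    rw [Finset.prod_congr rfl h, Finset.prod_mul_distrib,
      Finset.prod_range_succ (fun m => F m ^ (n - m))]
    simp [Nat.sub_self]


theorem stmt_14 (k : ℕ) (β y : ℝ) (hβ : β ∉ Set.range ((↑) : ℕ → ℝ))
    (t : Fin (k + 1) → ℝ) (ht : StrictMono t) (htI : ∀ i, t i ∈ Set.Ioo 0 π)
    (hpos : ∀ θ ∈ Set.Icc (0 : ℝ) π, 0 < 1 + y - Real.cos θ)
    (g : Fin (k + 1) → ℝ) (hg : ∀ i, g i = 1 + y - Real.cos (t i)) :
    (Matrix.det (fun i j : Fin (k + 1) =>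
          iteratedDeriv (j : ℕ) (fun y' => (1 + y' - Real.cos (t i)) ^ β) y) =
        (-1 : ℝ) ^ (k * (k + 1) / 2) * (∏ j ∈ Finset.range k, (β - (j : ℕ)) ^ (k - j)) *
          (∏ i, (g i) ^ (β - (k : ℝ))) * ∏ i, ∏ j, if i < j then g j - g i else 1) ∧
      Matrix.det (fun i j : Fin (k + 1) =>
          iteratedDeriv (j : ℕ) (fun y' => (1 + y' - Real.cos (t i)) ^ β) y) ≠ 0 := by
  have hgpos : ∀ i, 0 < g i := by
    intro i; rw [hg]; exact hpos (t i) (Set.Ioo_subset_Icc_self (htI i))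
  have hgmono : StrictMono g := by
    intro a b hab
    rw [hg, hg]
    have hc : Real.cos (t b) < Real.cos (t a) :=
      Real.strictAntiOn_cos (Set.Ioo_subset_Icc_self (htI a))
        (Set.Ioo_subset_Icc_self (htI b)) (ht hab)
    linarith
  -- Step A: entries
  have hM : (fun i j : Fin (k + 1) =>
        iteratedDeriv (j : ℕ) (fun y' => (1 + y' - Real.cos (t i)) ^ β) y)
      = fun i j : Fin (k + 1) => (∏ m ∈ Finset.range (j : ℕ), (β - (m : ℕ))) *
          (g i ^ (β - (k : ℝ)) * g i ^ ((k - (j : ℕ)) : ℕ)) := by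
    funext i j
    rw [aux_deriv (Real.cos (t i)) β (j : ℕ) y (by rw [← hg]; exact hgpos i), ← hg]
    congr 1
    rw [← Real.rpow_natCast (g i) (k - (j : ℕ)), ← Real.rpow_add (hgpos i)]
    congr 1
    have hj : (j : ℕ) ≤ k := Fin.is_le j
    push_cast [Nat.cast_sub hj]
    ring
  -- Step C: Vandermonde determinant
  have hV : Matrix.det (fun i j : Fin (k + 1) => g i ^ ((k - (j : ℕ)) : ℕ))
      = (-1 : ℝ) ^ (k * (k + 1) / 2) * ∏ i, ∏ j ∈ Finset.Ioi i, (g j - g i) := by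
    have heq : (fun i j : Fin (k + 1) => g i ^ ((k - (j : ℕ)) : ℕ))
        = (Matrix.vandermonde (fun i => g (Fin.rev i))).submatrix Fin.revPerm Fin.revPerm := by
      funext i j
      simp only [Matrix.submatrix_apply, Matrix.vandermonde_apply, Fin.revPerm_apply,
        Fin.rev_rev]
      congr 1
      rw [Fin.val_rev]
      omega
    rw [heq, Matrix.det_submatrix_equiv_self, Matrix.det_vandermonde]
    have := prod_rev_pairs (k + 1) g
    rw [this, sign_flip, count_pairs]
  -- Step D: column coefficients
  have hC : (∏ j : Fin (k + 1), ∏ m ∈ Finset.range (j : ℕ), (β - (m : ℕ)))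
      = ∏ j ∈ Finset.range k, (β - (j : ℕ)) ^ (k - j) := by
    rw [Fin.prod_univ_eq_prod_range (fun j => ∏ m ∈ Finset.range j, (β - (m : ℕ)))]
    exact col_coeff (fun m => β - (m : ℕ)) k
  -- Step E: if-product
  have hif : (∏ i, ∏ j, if i < j then g j - g i else 1)
      = ∏ i, ∏ j ∈ Finset.Ioi i, (g j - g i) := by
    refine Finset.prod_congr rfl fun i _ => ?_
    rw [← Finset.prod_filter]
    congr 1
    ext j; simp
  -- main computation
  have key : Matrix.det (fun i j : Fin (k + 1) =>
        iteratedDeriv (j : ℕ) (fun y' => (1 + y' - Real.cos (t i)) ^ β) y)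
      = (-1 : ℝ) ^ (k * (k + 1) / 2) * (∏ j ∈ Finset.range k, (β - (j : ℕ)) ^ (k - j)) *
          (∏ i, (g i) ^ (β - (k : ℝ))) * ∏ i, ∏ j, if i < j then g j - g i else 1 := by
    rw [hM]
    have h1 : Matrix.det (fun i j : Fin (k + 1) =>
          (∏ m ∈ Finset.range (j : ℕ), (β - (m : ℕ))) *
            (g i ^ (β - (k : ℝ)) * g i ^ ((k - (j : ℕ)) : ℕ)))
        = (∏ j : Fin (k + 1), ∏ m ∈ Finset.range (j : ℕ), (β - (m : ℕ))) *
            Matrix.det (fun i j : Fin (k + 1) =>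
              g i ^ (β - (k : ℝ)) * g i ^ ((k - (j : ℕ)) : ℕ)) :=
      Matrix.det_mul_row _ _
    have h2 : Matrix.det (fun i j : Fin (k + 1) =>
          g i ^ (β - (k : ℝ)) * g i ^ ((k - (j : ℕ)) : ℕ))
        = (∏ i, g i ^ (β - (k : ℝ))) *
            Matrix.det (fun i j : Fin (k + 1) => g i ^ ((k - (j : ℕ)) : ℕ)) :=
      Matrix.det_mul_column _ _
    rw [h1, h2, hV, hC, hif]
    ring
  refine ⟨key, ?_⟩
  rw [key]
  apply mul_ne_zero
  apply mul_ne_zero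
  apply mul_ne_zero
  · exact pow_ne_zero _ (by norm_num)
  · apply Finset.prod_ne_zero_iff.mpr
    intro j hj
    apply pow_ne_zero
    intro h
    exact hβ ⟨j, by linarith [sub_eq_zero.mp h]⟩
  · apply Finset.prod_ne_zero_iff.mpr
    intro i _
    exact (Real.rpow_pos_of_pos (hgpos i) _).ne'
  · apply ne_of_gt
    apply Finset.prod_pos
    intro i _
    apply Finset.prod_pos
    intro j _
    split_ifs with h
    · exact sub_pos.mpr (hgmono h)
    · exact one_pos
end
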